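/- For every automatic description mode R and every ε > 0 there exists an automatic description mode R' such that K_{R'}(xy) ≤ (1+ε)·K_R(x) + K_R(y) for all binary strings x and y. -/

import Mathlib

/-- A finite automaton: a finite directed graph whose edges are labeled by pairs
of an optional input letter and an optional output letter (`none` = ε). -/
structure Automaton (A B : Type*) where
  n : ℕ
  edges : List (Fin n × (Option A × Option B) × Fin n)

namespace Automaton

/-- `Reads G s t u v` : along some directed path from `s` to `t` one reads the
pair of strings `(u, v)` (concatenating labels, ε contributing nothing). -/
inductive Reads {A B : Type*} (G : Automaton A B) :
    Fin G.n → Fin G.n → List A → List B → Prop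
  | nil (s : Fin G.n) : Reads G s s [] []
  | step {s t r : Fin G.n} {a : Option A} {b : Option B} {u : List A} {v : List B} :
      (s, (a, b), t) ∈ G.edges → Reads G t r u v →
      Reads G s r (a.toList ++ u) (b.toList ++ v)

/-- The relation realized by the automaton: pairs readable along some directed
path, with arbitrary start and end states. -/
def Rel {A B : Type*} (G : Automaton A B) (u : List A) (v : List B) : Prop :=
  ∃ s t : Fin G.n, G.Reads s t u v

end Automaton

/-- A relation is automatic if it is realized by some automaton. -/
def IsAutomatic {A B : Type*} (R : List A → List B → Prop) : Prop :=
  ∃ G : Automaton A B, ∀ u v, R u v ↔ G.Rel u v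

/-- `R` is O(1)-valued: some constant bounds the number of strings related to any `p`. -/
def BoundedValued {A B : Type*} (R : List A → List B → Prop) : Prop :=
  ∃ c : ℕ, ∀ p, {x | R p x}.Finite ∧ {x | R p x}.ncard ≤ c

/-- An automatic description mode: an O(1)-valued automatic relation on binary strings. -/
def IsDescriptionMode (R : List Bool → List Bool → Prop) : Prop :=
  IsAutomatic R ∧ BoundedValued R

/-- Automatic Kolmogorov complexity: minimal length of a description of `x`
(`⊤` if there is none). -/
noncomputable def autK (R : List Bool → List Bool → Prop) (x : List Bool) : ℕ∞ :=
  sInf {n : ℕ∞ | ∃ p : List Bool, R p x ∧ n = p.length}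

open scoped ENNReal

/-!
If `p₁` and `p₂` are shortest descriptions of `x` and `y`, then `xy` is described by `p₁ ++ p₂`
with a marker bit inserted after each of the first `⌊|p₁| / N⌋` blocks of `N` bits of `p₁`
(`true`: another block follows, `false`: the last, shorter segment of `p₁` follows), which costs
`|p₁| / N ≤ ε |p₁|` bits once `1 / N < ε`. The new automaton simulates the automaton of `R` on
`p₁` while counting bits to skip the markers, and after the last segment jumps
nondeterministically to a fresh simulation on `p₂`. It stays O(1)-valued: once the counter of the
starting state is fixed, the markers of an input are determined, and the jump happens within `N`
bits of the last one, so every output is a concatenation of at most three outputs of `R` on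
pieces of the input chosen among `O(N²)` possibilities.
-/

section

variable {σ τ A B : Type*}

inductive Run (δ : σ → Option A × Option B → σ → Prop) : σ → σ → List A → List B → Prop
  | nil (s : σ) : Run δ s s [] []
  | cons {s t r : σ} {a : Option A} {b : Option B} {u : List A} {v : List B} :
      δ s (a, b) t → Run δ t r u v → Run δ s r (a.toList ++ u) (b.toList ++ v)

namespace Run

variable {δ : σ → Option A × Option B → σ → Prop}

theorem single {s t : σ} {a : Option A} {b : Option B} (h : δ s (a, b) t) :
    Run δ s t a.toList b.toList := by
  simpa using cons h (nil t)

theorem append {s t r : σ} {u u' : List A} {v v' : List B} (h : Run δ s t u v)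
    (h' : Run δ t r u' v') : Run δ s r (u ++ u') (v ++ v') := by
  induction h with
  | nil => simpa using h'
  | cons hst _ ih => simpa using cons hst (ih h')

theorem map {δ' : τ → Option A × Option B → τ → Prop} (f : σ → τ)
    (hf : ∀ s l t, δ s l t → δ' (f s) l (f t)) {s t : σ} {u : List A} {v : List B}
    (h : Run δ s t u v) : Run δ' (f s) (f t) u v := by
  induction h with
  | nil s => exact nil (f s)
  | cons hst _ ih => exact cons (hf _ _ _ hst) ih

theorem split_input {s t : σ} {u₁ u₂ : List A} {v : List B} (h : Run δ s t (u₁ ++ u₂) v) :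
    ∃ m v₁ v₂, v = v₁ ++ v₂ ∧ Run δ s m u₁ v₁ ∧ Run δ m t u₂ v₂ := by
  generalize hu : u₁ ++ u₂ = w at h
  induction h generalizing u₁ with
  | nil s =>
    obtain ⟨rfl, rfl⟩ := List.append_eq_nil_iff.mp hu
    exact ⟨s, [], [], rfl, nil s, nil s⟩
  | @cons s t r a b u v hst hrun ih =>
    rcases u₁ with _ | ⟨c, u₁⟩
    · subst hu
      exact ⟨s, [], _, rfl, nil s, cons hst hrun⟩
    · cases a with
      | none =>
        obtain ⟨m, v₁, v₂, rfl, h₁, h₂⟩ := ih (u₁ := c :: u₁) (by simpa using hu)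
        exact ⟨m, b.toList ++ v₁, v₂, by simp, by simpa using cons hst h₁, h₂⟩
      | some a =>
        simp only [Option.toList_some, List.cons_append, List.nil_append, List.cons.injEq] at hu
        obtain ⟨rfl, hu⟩ := hu
        obtain ⟨m, v₁, v₂, rfl, h₁, h₂⟩ := ih hu
        exact ⟨m, b.toList ++ v₁, v₂, by simp, cons hst h₁, h₂⟩

end Run

namespace Automaton

def step (G : Automaton A B) (s : Fin G.n) (l : Option A × Option B) (t : Fin G.n) : Prop :=
  (s, l, t) ∈ G.edges

theorem reads_iff_run {G : Automaton A B} {s t : Fin G.n} {u : List A} {v : List B} :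
    G.Reads s t u v ↔ Run G.step s t u v := by
  constructor <;> intro h
  · induction h with
    | nil s => exact .nil s
    | step hst _ ih => exact .cons hst ih
  · induction h with
    | nil s => exact .nil s
    | cons hst _ ih => exact .step hst ih

end Automaton

theorem isAutomatic_run [Finite σ] [Finite A] [Finite B] (δ : σ → Option A × Option B → σ → Prop) :
    IsAutomatic fun u v => ∃ s t, Run δ s t u v := by
  let e := Finite.equivFin σ
  let edges : Set (Fin (Nat.card σ) × (Option A × Option B) × Fin (Nat.card σ)) :=
    {x | δ (e.symm x.1) x.2.1 (e.symm x.2.2)}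
  let G : Automaton A B := ⟨Nat.card σ, (Set.toFinite edges).toFinset.toList⟩
  have hstep : ∀ q l q', G.step q l q' ↔ δ (e.symm q) l (e.symm q') := by
    simp [G, edges, Automaton.step]
  refine ⟨G, fun u v => ⟨fun ⟨s, t, h⟩ => ⟨e s, e t, ?_⟩,
    fun ⟨q, q', h⟩ => ⟨e.symm q, e.symm q', ?_⟩⟩⟩
  · exact Automaton.reads_iff_run.2 (h.map e fun s l t h => by simpa [hstep])
  · exact (Automaton.reads_iff_run.1 h).map e.symm fun q l q' => (hstep q l q').1

end

theorem Set.ncard_image2_le {α β γ : Type*} (f : α → β → γ) {s : Set α} {t : Set β}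
    (hs : s.Finite) (ht : t.Finite) : (Set.image2 f s t).ncard ≤ s.ncard * t.ncard := by
  rw [← Set.image_prod, ← Set.ncard_prod]
  exact Set.ncard_image_le (hs.prod ht)

namespace BoundedValued

variable {A B : Type*} {R R₁ R₂ : List A → List B → Prop}

theorem mono (h : BoundedValued R₂) (hle : ∀ p x, R₁ p x → R₂ p x) : BoundedValued R₁ := by
  obtain ⟨c, hc⟩ := h
  refine ⟨c, fun p => ⟨(hc p).1.subset (hle p), ?_⟩⟩
  exact (Set.ncard_le_ncard (hle p) (hc p).1).trans (hc p).2

theorem comp (h : BoundedValued R) (f : List A → List A) : BoundedValued fun p x => R (f p) x := by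
  obtain ⟨c, hc⟩ := h
  exact ⟨c, fun p => hc (f p)⟩

theorem or (h₁ : BoundedValued R₁) (h₂ : BoundedValued R₂) :
    BoundedValued fun p x => R₁ p x ∨ R₂ p x := by
  obtain ⟨c₁, hc₁⟩ := h₁
  obtain ⟨c₂, hc₂⟩ := h₂
  refine ⟨c₁ + c₂, fun p => ⟨(hc₁ p).1.union (hc₂ p).1, ?_⟩⟩
  exact (Set.ncard_union_le _ _).trans (add_le_add (hc₁ p).2 (hc₂ p).2)

theorem exists_le {R : ℕ → List A → List B → Prop} (h : ∀ i, BoundedValued (R i)) (N : ℕ) :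
    BoundedValued fun p x => ∃ i ≤ N, R i p x := by
  induction N with
  | zero => simpa using h 0
  | succ N ih =>
    refine (ih.or (h (N + 1))).mono fun p x ⟨i, hi, hx⟩ => ?_
    rcases Nat.lt_or_eq_of_le hi with hi | rfl
    exacts [Or.inl ⟨i, by omega, hx⟩, Or.inr hx]

theorem append (h₁ : BoundedValued R₁) (h₂ : BoundedValued R₂) :
    BoundedValued fun p z => ∃ x y, z = x ++ y ∧ R₁ p x ∧ R₂ p y := by
  obtain ⟨c₁, hc₁⟩ := h₁
  obtain ⟨c₂, hc₂⟩ := h₂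
  refine ⟨c₁ * c₂, fun p => ?_⟩
  have himage : {z | ∃ x y, z = x ++ y ∧ R₁ p x ∧ R₂ p y} =
      Set.image2 (· ++ ·) {x | R₁ p x} {y | R₂ p y} := by
    ext z
    simp only [Set.mem_ofPred_eq, Set.mem_image2]
    exact ⟨fun ⟨x, y, hz, hx, hy⟩ => ⟨x, hx, y, hy, hz.symm⟩,
      fun ⟨x, hx, y, hy, hz⟩ => ⟨x, y, hz.symm, hx, hy⟩⟩
  rw [himage]
  exact ⟨(hc₁ p).1.image2 _ (hc₂ p).1, (Set.ncard_image2_le _ (hc₁ p).1 (hc₂ p).1).trans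
    (Nat.mul_le_mul (hc₁ p).2 (hc₂ p).2)⟩

end BoundedValued

theorem boundedValued_eq {A B : Type*} (f : List A → List B) :
    BoundedValued fun p x => x = f p :=
  ⟨1, fun p => by simp⟩

theorem ENNReal.natCast_div_le_mul {ε : ℝ≥0∞} {N : ℕ} (hN : 0 < N) (hε : (N : ℝ≥0∞)⁻¹ ≤ ε) (L : ℕ) :
    ((L / N : ℕ) : ℝ≥0∞) ≤ ε * L :=
  calc ((L / N : ℕ) : ℝ≥0∞) ≤ L / N := by
        rw [ENNReal.le_div_iff_mul_le (.inl (by simp [hN.ne'])) (.inl (ENNReal.natCast_ne_top N))]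
        exact_mod_cast Nat.div_mul_le_self L N
    _ = (N : ℝ≥0∞)⁻¹ * L := by rw [div_eq_mul_inv, mul_comm]
    _ ≤ ε * L := by gcongr

theorem autK_le_length {R : List Bool → List Bool → Prop} {p x : List Bool} (h : R p x) :
    autK R x ≤ p.length :=
  sInf_le ⟨p, h, rfl⟩

theorem exists_length_eq_autK {R : List Bool → List Bool → Prop} {x : List Bool}
    (h : autK R x ≠ ⊤) : ∃ p, R p x ∧ (p.length : ℕ∞) = autK R x := by
  have hne : {n : ℕ∞ | ∃ p, R p x ∧ n = p.length}.Nonempty :=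
    Set.nonempty_iff_ne_empty.2 fun he => h (by rw [autK, he, sInf_empty])
  obtain ⟨p, hp, hlen⟩ := csInf_mem hne
  exact ⟨p, hp, hlen.symm⟩

namespace MarkedConcat

/-- `counted false s i`: in a block of `p₁`, `i` bits of it read; `counted true s j`: in the last
segment of `p₁`, `j` bits of it read; `sim s`: in `p₂`. Here `s` is the simulated state. -/
inductive State (n N : ℕ)
  | counted (tail : Bool) (s : Fin n) (i : Fin (N + 1))
  | sim (s : Fin n)
  deriving Fintype

variable (G : Automaton Bool Bool) (N : ℕ)

inductive Step : State G.n N → Option Bool × Option Bool → State G.n N → Prop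
  | sim {s t : Fin G.n} {l : Option Bool × Option Bool} : G.step s l t → Step (.sim s) l (.sim t)
  | counted {tail : Bool} {s t : Fin G.n} {a b : Option Bool} {i j : Fin (N + 1)} :
      G.step s (a, b) t → (j : ℕ) = i + a.toList.length →
      Step (.counted tail s i) (a, b) (.counted tail t j)
  | nextBlock (s : Fin G.n) :
      Step (.counted false s (Fin.last N)) (some true, none) (.counted false s 0)
  | lastBlock (s : Fin G.n) :
      Step (.counted false s (Fin.last N)) (some false, none) (.counted true s 0)
  | jump (s : Fin G.n) (j : Fin (N + 1)) (t : Fin G.n) :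
      Step (.counted true s j) (none, none) (.sim t)

def insertMarkers : ℕ → List Bool → List Bool
  | 0, u => u
  | 1, u => u.take N ++ false :: u.drop N
  | k + 2, u => u.take N ++ true :: insertMarkers (k + 1) (u.drop N)

theorem length_insertMarkers {k : ℕ} {u : List Bool} (h : N * k ≤ u.length) :
    (insertMarkers N k u).length = u.length + k := by
  induction k, u using insertMarkers.induct N with
  | case1 => simp [insertMarkers]
  | case2 u =>
    simp only [insertMarkers, List.length_append, List.length_take, List.length_cons,
      List.length_drop]
    omega
  | case3 k u ih =>
    rw [Nat.mul_succ] at h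
    simp only [insertMarkers, List.length_append, List.length_take, List.length_cons,
      ih (by rw [List.length_drop]; omega), List.length_drop]
    omega

variable {G N}

theorem run_counted (tail : Bool) {s t : Fin G.n} {u x : List Bool} (h : Run G.step s t u x)
    (i j : Fin (N + 1)) (hj : (j : ℕ) = i + u.length) :
    Run (Step G N) (.counted tail s i) (.counted tail t j) u x := by
  induction h generalizing i with
  | nil => obtain rfl : j = i := Fin.ext (by simpa using hj); exact .nil _
  | @cons s t r a b u v hst _ ih =>
    have hlen : (a.toList ++ u).length = a.toList.length + u.length := List.length_append
    exact .cons (.counted hst rfl) (ih ⟨i + a.toList.length, by omega⟩ (by dsimp only; omega))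

theorem run_sim {s t : Fin G.n} {u x : List Bool} (h : Run G.step s t u x) :
    Run (Step G N) (.sim s) (.sim t) u x :=
  h.map State.sim fun _ _ _ => .sim

theorem exists_run_block {s t : Fin G.n} {u x : List Bool} (h : Run G.step s t u x)
    (hu : N ≤ u.length) : ∃ m x₁ x₂, x = x₁ ++ x₂ ∧
      Run (Step G N) (.counted false s 0) (.counted false m (Fin.last N)) (u.take N) x₁ ∧
      Run G.step m t (u.drop N) x₂ := by
  rw [← List.take_append_drop N u] at h
  obtain ⟨m, x₁, x₂, rfl, h₁, h₂⟩ := h.split_input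
  exact ⟨m, x₁, x₂, rfl, run_counted false h₁ 0 (Fin.last N) (by simp [hu]), h₂⟩

theorem run_insertMarkers (k : ℕ) {s t : Fin G.n} {u x : List Bool} (h : Run G.step s t u x)
    (hk : N * (k + 1) ≤ u.length) (hk' : u.length ≤ N * (k + 1) + N) :
    ∃ j, Run (Step G N) (.counted false s 0) (.counted true t j) (insertMarkers N (k + 1) u) x := by
  have hlen : (u.drop N).length = u.length - N := List.length_drop
  induction k generalizing s u x with
  | zero =>
    obtain ⟨m, x₁, x₂, rfl, hblock, hrest⟩ := exists_run_block (N := N) h (by omega)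
    have htail : Run (Step G N) (.counted true m 0) (.counted true t ⟨(u.drop N).length, by omega⟩)
        (u.drop N) x₂ :=
      run_counted true hrest 0 _ (by simp)
    exact ⟨_, by
      simpa [insertMarkers] using hblock.append ((Run.single (.lastBlock m)).append htail)⟩
  | succ k ih =>
    rw [Nat.mul_succ] at hk hk'
    obtain ⟨m, x₁, x₂, rfl, hblock, hrest⟩ := exists_run_block (N := N) h (by omega)
    obtain ⟨j, hrun⟩ := ih hrest (by omega) (by omega) List.length_drop
    exact ⟨j, by
      simpa [insertMarkers] using hblock.append ((Run.single (.nextBlock m)).append hrun)⟩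

theorem exists_run_encode (hN : 0 < N) {s t s' t' : Fin G.n} {p₁ p₂ x y : List Bool}
    (h₁ : Run G.step s t p₁ x) (h₂ : Run G.step s' t' p₂ y) :
    ∃ q r, Run (Step G N) q r (insertMarkers N (p₁.length / N) p₁ ++ p₂) (x ++ y) := by
  obtain ⟨q, j, hx⟩ : ∃ q j,
      Run (Step G N) q (.counted true t j) (insertMarkers N (p₁.length / N) p₁) x := by
    have hdiv := Nat.div_add_mod p₁.length N
    have hmod := Nat.mod_lt p₁.length hN
    rcases hk : p₁.length / N with _ | k <;> rw [hk] at hdiv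
    · exact ⟨_, _, run_counted true h₁ 0 ⟨p₁.length, by omega⟩ (by simp)⟩
    · exact ⟨_, run_insertMarkers k h₁ (by omega) (by omega)⟩
  exact ⟨q, .sim t', by simpa using hx.append ((Run.single (.jump t j s')).append (run_sim h₂))⟩

variable (G N)

/-- The data bits read in the block phase from counter `i`, and what follows the `false` marker
if it is reached. -/
def unmark : ℕ → List Bool → List Bool × Option (List Bool)
  | _, [] => ([], none)
  | i, c :: w =>
    if i < N then (unmark (i + 1) w).map (c :: ·) id
    else if c then unmark 0 w else ([], some w)

theorem unmark_append_toList {i : ℕ} {a : Option Bool} (h : i + a.toList.length ≤ N)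
    (w : List Bool) :
    unmark N i (a.toList ++ w) = (unmark N (i + a.toList.length) w).map (a.toList ++ ·) id := by
  cases a with
  | none => simp [Prod.map]
  | some c => simp [unmark, show i < N by simpa using h]

def TailInv (s : Fin G.n) (j : ℕ) (u z : List Bool) : Prop :=
  (∃ t, Run G.step s t u z) ∨ ∃ p₁ p₂ x y t, u = p₁ ++ p₂ ∧ z = x ++ y ∧ j + p₁.length ≤ N ∧
    Run G.step s t p₁ x ∧ G.Rel p₂ y

def BlockInv (s : Fin G.n) (i : ℕ) (u z : List Bool) : Prop :=
  ∃ x y t, z = x ++ y ∧ Run G.step s t (unmark N i u).1 x ∧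
    (unmark N i u).2.elim (y = []) fun rest => TailInv G N t 0 rest y

def Inv : State G.n N → List Bool → List Bool → Prop
  | .counted false s i => BlockInv G N s i
  | .counted true s j => TailInv G N s j
  | .sim s => fun u z => ∃ t, Run G.step s t u z

variable {G N}

theorem TailInv.cons {s t : Fin G.n} {a b : Option Bool} {j j' : ℕ} {u z : List Bool}
    (hst : G.step s (a, b) t) (hj : j' = j + a.toList.length) (h : TailInv G N t j' u z) :
    TailInv G N s j (a.toList ++ u) (b.toList ++ z) := by
  rcases h with ⟨r, h⟩ | ⟨p₁, p₂, x, y, r, rfl, rfl, hlen, h₁, h₂⟩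
  · exact .inl ⟨r, .cons hst h⟩
  · exact .inr ⟨a.toList ++ p₁, p₂, b.toList ++ x, y, r, by simp, by simp,
      by simp; omega, .cons hst h₁, h₂⟩

theorem TailInv.jump {s t : Fin G.n} {j : ℕ} {u z : List Bool} (hj : j ≤ N)
    (h : ∃ r, Run G.step t r u z) : TailInv G N s j u z :=
  .inr ⟨[], u, [], z, s, rfl, rfl, by simpa using hj, .nil s,
    h.elim fun r h => ⟨t, r, Automaton.reads_iff_run.2 h⟩⟩

theorem BlockInv.cons {s t : Fin G.n} {a b : Option Bool} {i i' : ℕ} {u z : List Bool}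
    (hst : G.step s (a, b) t) (hi : i' = i + a.toList.length) (hi' : i' ≤ N)
    (h : BlockInv G N t i' u z) : BlockInv G N s i (a.toList ++ u) (b.toList ++ z) := by
  obtain ⟨x, y, r, rfl, hx, hy⟩ := h
  subst hi
  refine ⟨b.toList ++ x, y, r, by simp, ?_, ?_⟩ <;> rw [unmark_append_toList N hi']
  exacts [.cons hst hx, hy]

theorem BlockInv.nextBlock {s : Fin G.n} {u z : List Bool} (h : BlockInv G N s 0 u z) :
    BlockInv G N s N (true :: u) z := by
  simpa [BlockInv, unmark] using h

theorem BlockInv.lastBlock {s : Fin G.n} {u z : List Bool} (h : TailInv G N s 0 u z) :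
    BlockInv G N s N (false :: u) z :=
  ⟨[], z, s, rfl, by simpa [unmark] using Run.nil s, by simpa [unmark] using h⟩

theorem inv_nil (q : State G.n N) : Inv G N q [] [] := by
  rcases q with ⟨_ | _, s, i⟩ | s
  · exact ⟨[], [], s, rfl, by simpa [unmark] using Run.nil s, by simp [unmark]⟩
  · exact .inl ⟨s, .nil s⟩
  · exact ⟨s, .nil s⟩

theorem inv_of_run {q r : State G.n N} {u z : List Bool} (h : Run (Step G N) q r u z) :
    Inv G N q u z := by
  induction h with
  | nil q => exact inv_nil q
  | cons hstep _ ih =>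
    cases hstep with
    | sim hst => exact ih.elim fun r h => ⟨r, .cons hst h⟩
    | @counted tail _ _ _ _ i j hst hj =>
      cases tail
      exacts [BlockInv.cons hst hj j.is_le ih, TailInv.cons hst hj ih]
    | nextBlock s => exact BlockInv.nextBlock ih
    | lastBlock s => exact BlockInv.lastBlock ih
    | jump s j t => exact TailInv.jump j.is_le ih

section Candidates

variable (R : List Bool → List Bool → Prop) (N : ℕ)

def tailCandidates (w z : List Bool) : Prop :=
  R w z ∨ ∃ ℓ ≤ N, ∃ x y, z = x ++ y ∧ R (w.take ℓ) x ∧ R (w.drop ℓ) y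

/-- A superset of the outputs on `w` (`candidates_of_run`); `i` is the counter of the starting
state and `ℓ` the jump point in the last segment. -/
def candidates (w z : List Bool) : Prop :=
  tailCandidates R N w z ∨ ∃ i ≤ N, ∃ x y, z = x ++ y ∧ R (unmark N i w).1 x ∧
    (y = [] ∨ tailCandidates R N ((unmark N i w).2.getD []) y)

variable {R N}

theorem boundedValued_tailCandidates (h : BoundedValued R) : BoundedValued (tailCandidates R N) :=
  h.or (.exists_le (fun ℓ => (h.comp (List.take ℓ)).append (h.comp (List.drop ℓ))) N)

theorem boundedValued_candidates (h : BoundedValued R) : BoundedValued (candidates R N) :=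
  (boundedValued_tailCandidates h).or (.exists_le (fun i => (h.comp (unmark N i · |>.1)).append
    ((boundedValued_eq fun _ => []).or ((boundedValued_tailCandidates h).comp _))) N)

end Candidates

theorem TailInv.tailCandidates {s : Fin G.n} {j : ℕ} {u z : List Bool} (h : TailInv G N s j u z) :
    tailCandidates G.Rel N u z := by
  rcases h with ⟨t, h⟩ | ⟨p₁, p₂, x, y, t, rfl, rfl, hlen, h₁, h₂⟩
  · exact .inl ⟨s, t, Automaton.reads_iff_run.2 h⟩
  · exact .inr ⟨p₁.length, by omega, x, y, rfl, by simpa using ⟨s, t, Automaton.reads_iff_run.2 h₁⟩,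
      by simpa using h₂⟩

theorem candidates_of_run {q r : State G.n N} {u z : List Bool} (h : Run (Step G N) q r u z) :
    candidates G.Rel N u z := by
  have hinv := inv_of_run h
  rcases q with ⟨_ | _, s, i⟩ | s
  · obtain ⟨x, y, t, rfl, hx, hy⟩ := hinv
    refine .inr ⟨i, i.is_le, x, y, rfl, ⟨s, t, Automaton.reads_iff_run.2 hx⟩, ?_⟩
    rcases ho : (unmark N i u).2 with _ | rest <;> rw [ho] at hy
    exacts [.inl hy, .inr hy.tailCandidates]
  · exact .inl hinv.tailCandidates
  · obtain ⟨t, h⟩ := hinv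
    exact .inl (.inl ⟨s, t, Automaton.reads_iff_run.2 h⟩)

end MarkedConcat

open MarkedConcat in
theorem IsDescriptionMode.exists_append_description {R : List Bool → List Bool → Prop}
    (hR : IsDescriptionMode R) {N : ℕ} (hN : 0 < N) :
    ∃ R', IsDescriptionMode R' ∧ ∀ {p₁ p₂ x y}, R p₁ x → R p₂ y →
      ∃ p, R' p (x ++ y) ∧ p.length = p₁.length + p₁.length / N + p₂.length := by
  obtain ⟨⟨G, hG⟩, hbd⟩ := hR
  obtain rfl : R = G.Rel := funext₂ fun u v => propext (hG u v)
  refine ⟨fun u v => ∃ q r, Run (Step G N) q r u v, ⟨isAutomatic_run _,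
    (boundedValued_candidates hbd).mono fun u v ⟨q, r, h⟩ => candidates_of_run h⟩, ?_⟩
  rintro p₁ p₂ x y ⟨s, t, hx⟩ ⟨s', t', hy⟩
  refine ⟨_, exists_run_encode hN (Automaton.reads_iff_run.1 hx) (Automaton.reads_iff_run.1 hy), ?_⟩
  rw [List.length_append, length_insertMarkers N (Nat.mul_div_le _ _)]

/-- For every mode `R` and `ε > 0` there is a mode `R'` with
`K_{R'}(xy) ≤ (1+ε)·K_R(x) + K_R(y)` for all `x, y`. -/
theorem autK_concat_almost_additive (R : List Bool → List Bool → Prop)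
    (hR : IsDescriptionMode R) (ε : ℝ≥0∞) (hε : 0 < ε) :
    ∃ R' : List Bool → List Bool → Prop, IsDescriptionMode R' ∧
      ∀ x y : List Bool,
        (autK R' (x ++ y) : ℝ≥0∞) ≤ (1 + ε) * (autK R x : ℝ≥0∞) + (autK R y : ℝ≥0∞) := by
  obtain ⟨N, hNε⟩ := ENNReal.exists_inv_nat_lt hε.ne'
  have hN : 0 < N := Nat.pos_of_ne_zero fun h => by simp [h] at hNε
  obtain ⟨R', hR', happend⟩ := hR.exists_append_description hN
  refine ⟨R', hR', fun x y => ?_⟩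
  rcases eq_or_ne (autK R x) ⊤ with hx | hx
  · simp [hx, ENNReal.mul_top]
  rcases eq_or_ne (autK R y) ⊤ with hy | hy
  · simp [hy]
  obtain ⟨p₁, hp₁, hKx⟩ := exists_length_eq_autK hx
  obtain ⟨p₂, hp₂, hKy⟩ := exists_length_eq_autK hy
  obtain ⟨p, hp, hlen⟩ := happend hp₁ hp₂
  calc (autK R' (x ++ y) : ℝ≥0∞) ≤ p.length := by exact_mod_cast autK_le_length hp
    _ = p₁.length + (p₁.length / N : ℕ) + p₂.length := by simp [hlen]
    _ ≤ (1 + ε) * p₁.length + p₂.length := by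
      rw [add_mul, one_mul]
      gcongr
      exact ENNReal.natCast_div_le_mul hN hNε.le _
    _ = (1 + ε) * (autK R x : ℝ≥0∞) + (autK R y : ℝ≥0∞) := by simp [← hKx, ← hKy]
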